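/- Let (t, u, v) be consecutive clockwise vertices on the convex hull of a finite planar point set P in general position, and let p be a point active for u but not active for v. After deleting v, let v′ denote the new clockwise hull-neighbor of u on CH(P \ {v}). Then p lies strictly inside the triangle t u v′. -/

import Mathlib

open Set MeasureTheory

noncomputable section

abbrev Pt := EuclideanSpace ℝ (Fin 2)

/-- General position: no three distinct points of `S` are collinear. -/
def GenPos (S : Set Pt) : Prop :=
  ∀ p q r : Pt, p ∈ S → q ∈ S → r ∈ S → p ≠ q → q ≠ r → p ≠ r →
    ¬ Collinear ℝ ({p, q, r} : Set Pt)

/-- `p` is a vertex (extreme point) of the convex hull of `S`. -/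
def IsHullVertex (S : Set Pt) (p : Pt) : Prop :=
  p ∈ S ∧ p ∉ convexHull ℝ (S \ {p})

/-- `p` is active for the hull vertex `u` of `S`: it is a vertex of
`CH(S \ {u})` but not a vertex of `CH(S)`. -/
def ActiveFor (S : Set Pt) (u p : Pt) : Prop :=
  IsHullVertex (S \ {u}) p ∧ ¬ IsHullVertex S p

/-- `a` and `b` are adjacent (consecutive) vertices on the convex hull of `S`:
both are hull vertices and the segment between them lies on the hull boundary. -/
def AdjacentVertices (S : Set Pt) (a b : Pt) : Prop :=
  a ≠ b ∧ IsHullVertex S a ∧ IsHullVertex S b ∧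
    segment ℝ a b ⊆ frontier (convexHull ℝ S)

/-- 2D cross product. -/
def cross2 (a b : Pt) : ℝ := a 0 * b 1 - a 1 * b 0

/-- `(t, u, v)` are consecutive vertices of the hull of `S`, in clockwise order
(the turn `t → u → v` is a right turn). -/
def ConsecutiveCW (S : Set Pt) (t u v : Pt) : Prop :=
  AdjacentVertices S t u ∧ AdjacentVertices S u v ∧ t ≠ v ∧
    cross2 (u - t) (v - u) ≤ 0

/-- Area of the convex hull of `S`. -/
def hullArea (S : Set Pt) : ENNReal := volume (convexHull ℝ S)

/-!
Work in the barycentric coordinates of the triangle `t u v'` and with `S = P \ {v}`. The hull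
edges `t u` and `u v'` of `S` lie on supporting lines which, by general position, leave every
other point of `S` strictly on one side; this makes the `v'`- and `t`-coordinates of `p` positive.
If the `u`-coordinate of `p` were nonpositive: `p` is not a hull vertex of `S`, so it lies on a
segment `[u, y]` with `y ∈ conv (S \ {u, p})`, and `[u, p]` meets the line `t v'` at a point `z`
whose other two coordinates are nonnegative, i.e. `z ∈ [t, v']`. Then
`p ∈ [z, y] ⊆ conv (S \ {u, p}) ⊆ conv (P \ {u} \ {p})`, so `p` is not a hull vertex of `P \ {u}`.
-/

theorem AffineBasis.apply_eq_coord_mul {ι k V P : Type*} [Fintype ι] [Ring k] [AddCommGroup V]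
    [Module k V] [AddTorsor V P] (b : AffineBasis ι k P) (F : P →ᵃ[k] k) {i : ι}
    (hF : ∀ j ≠ i, F (b j) = 0) (x : P) : F x = b.coord i x * F (b i) := by
  conv_lhs => rw [← b.affineCombination_coord_eq_self x]
  rw [Finset.map_affineCombination _ _ _ (b.sum_coord_apply_eq_one x),
    Finset.affineCombination_eq_linear_combination _ _ _ (b.sum_coord_apply_eq_one x),
    Fintype.sum_eq_single i fun j hj => by simp [hF j hj]]
  simp

theorem AffineBasis.coord_pos_of_apply_pos {ι V P : Type*} [Fintype ι] [AddCommGroup V]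
    [Module ℝ V] [AddTorsor V P] (b : AffineBasis ι ℝ P) (F : P →ᵃ[ℝ] ℝ) {i : ι}
    (hF : ∀ j ≠ i, F (b j) = 0) (hi : 0 < F (b i)) {x : P} (hx : 0 < F x) :
    0 < b.coord i x :=
  pos_of_mul_pos_left (b.apply_eq_coord_mul F hF x ▸ hx) hi.le

theorem AffineBasis.mem_segment_of_coord_one_eq_zero {V : Type*} [AddCommGroup V] [Module ℝ V]
    (b : AffineBasis (Fin 3) ℝ V) {x : V} (h0 : 0 ≤ b.coord 0 x) (h1 : b.coord 1 x = 0)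
    (h2 : 0 ≤ b.coord 2 x) : x ∈ segment ℝ (b 0) (b 2) := by
  have hsum := b.sum_coord_apply_eq_one x
  rw [Fin.sum_univ_three, h1] at hsum
  rw [segment_eq_image_lineMap]
  refine ⟨b.coord 2 x, ⟨h2, by linarith⟩, b.ext_elem fun i => ?_⟩
  rw [AffineMap.apply_lineMap, AffineMap.lineMap_apply_ring']
  fin_cases i <;> simp [b.coord_apply_eq, b.coord_apply_ne, h1]
  linarith

theorem AffineMap.exists_mem_segment_apply_eq_zero {V : Type*} [AddCommGroup V] [Module ℝ V]
    (f : V →ᵃ[ℝ] ℝ) {a b : V} (ha : 0 ≤ f a) (hb : f b ≤ 0) :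
    ∃ z ∈ segment ℝ a b, f z = 0 := by
  rcases (sub_nonneg.2 (hb.trans ha)).eq_or_lt with hab | hab
  · exact ⟨a, left_mem_segment ℝ a b, by linarith⟩
  refine ⟨lineMap a b (f a / (f a - f b)), ?_, ?_⟩
  · rw [segment_eq_image_lineMap]
    exact ⟨_, ⟨div_nonneg ha hab.le, (div_le_one hab).2 (by linarith)⟩, rfl⟩
  · rw [f.apply_lineMap, AffineMap.lineMap_apply_ring']
    field_simp
    ring

theorem AffineBasis.coord_one_pos_of_notMem_convexHull {V : Type*} [AddCommGroup V]
    [Module ℝ V] (b : AffineBasis (Fin 3) ℝ V) {C : Set V} {p : V} (h0C : b 0 ∈ C)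
    (h2C : b 2 ∈ C) (hpC : p ∉ convexHull ℝ C) (hp : p ∈ convexHull ℝ (insert (b 1) C))
    (h0 : 0 < b.coord 0 p) (h2 : 0 < b.coord 2 p) : 0 < b.coord 1 p := by
  by_contra! h1
  rw [convexHull_insert ⟨_, h0C⟩, mem_convexJoin] at hp
  obtain ⟨_, rfl, y, hy, hpy⟩ := hp
  obtain ⟨z, hz, hz1⟩ :=
    (b.coord 1).exists_mem_segment_apply_eq_zero (b.coord_apply_eq 1 ▸ zero_le_one) h1
  have coord_nonneg (i : Fin 3) (hi : i ≠ 1) (hp : 0 < b.coord i p) : 0 ≤ b.coord i z :=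
    ((convex_Ici 0).affine_preimage (b.coord i)).segment_subset
      (b.coord_apply_ne hi).ge hp.le hz
  have hzC : z ∈ convexHull ℝ C := segment_subset_convexHull h0C h2C
    (b.mem_segment_of_coord_one_eq_zero (coord_nonneg 0 (by decide) h0) hz1
      (coord_nonneg 2 (by decide) h2))
  have hpzy : p ∈ segment ℝ z y := mem_segment_iff_wbtw.2 <|
    (mem_segment_iff_wbtw.1 hpy).trans_left_right (mem_segment_iff_wbtw.1 hz)
  exact hpC ((convex_convexHull ℝ C).segment_subset hzC hy hpzy)

theorem Convex.exists_strongDual_le_of_notMem_interior {E : Type*} [NormedAddCommGroup E]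
    [NormedSpace ℝ E] {K : Set E} (hK : Convex ℝ K) (hK' : (interior K).Nonempty) {m : E}
    (hm : m ∉ interior K) :
    ∃ f : StrongDual ℝ E, (∀ w ∈ interior K, f w < f m) ∧ ∀ q ∈ K, f q ≤ f m := by
  obtain ⟨f, hf⟩ := geometric_hahn_banach_open_point hK.interior isOpen_interior hm
  have hclosure : closure (interior K) ⊆ {x | f x ≤ f m} :=
    closure_minimal (fun x hx => (hf x hx).le) (isClosed_le f.continuous continuous_const)
  rw [hK.closure_interior_eq_closure_of_nonempty_interior hK'] at hclosure
  exact ⟨f, hf, fun q hq => hclosure (subset_closure hq)⟩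

theorem GenPos.mono {S T : Set Pt} (h : GenPos T) (hST : S ⊆ T) : GenPos S :=
  fun a b c ha hb hc => h a b c (hST ha) (hST hb) (hST hc)

def triangleBasis {a b c : Pt} (h : ¬ Collinear ℝ ({a, b, c} : Set Pt)) :
    AffineBasis (Fin 3) ℝ Pt :=
  ⟨![a, b, c], affineIndependent_iff_not_collinear_set.2 h, by
    rw [(affineIndependent_iff_not_collinear_set.2 h).affineSpan_eq_top_iff_card_eq_finrank_add_one]
    simp⟩

theorem range_triangleBasis {a b c : Pt} (h : ¬ Collinear ℝ ({a, b, c} : Set Pt)) :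
    range (triangleBasis h) = {a, b, c} := by
  show range ![a, b, c] = _
  simp only [Matrix.range_cons, Matrix.range_empty, union_empty, singleton_union]

theorem affineSpan_eq_top_of_not_collinear {a b c : Pt}
    (h : ¬ Collinear ℝ ({a, b, c} : Set Pt)) : affineSpan ℝ {a, b, c} = ⊤ :=
  range_triangleBasis h ▸ (triangleBasis h).tot

theorem AdjacentVertices.exists_supporting_affineMap {S : Set Pt} {a c : Pt}
    (hac : AdjacentVertices S a c) (hgp : GenPos S) (hS : affineSpan ℝ S = ⊤) :
    ∃ F : Pt →ᵃ[ℝ] ℝ, F a = 0 ∧ F c = 0 ∧ ∀ q ∈ S, q ≠ a → q ≠ c → 0 < F q := by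
  obtain ⟨hne, ha, hc, hseg⟩ := hac
  have hint := interior_convexHull_nonempty_iff_affineSpan_eq_top.2 hS
  obtain ⟨f, hfw, hf⟩ := (convex_convexHull ℝ S).exists_strongDual_le_of_notMem_interior hint
    (hseg (midpoint_mem_segment a c)).2
  set F : Pt →ᵃ[ℝ] ℝ := AffineMap.const ℝ Pt (f (midpoint ℝ a c)) - f.toLinearMap.toAffineMap
  have hFapply (x : Pt) : F x = f (midpoint ℝ a c) - f x := rfl
  have hF (q : Pt) (hq : q ∈ S) : 0 ≤ F q := by
    rw [hFapply, sub_nonneg]; exact hf q (subset_convexHull ℝ S hq)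
  have hFmid : F a + F c = 0 := by
    have := F.map_midpoint a c
    rw [hFapply, sub_self, midpoint_eq_smul_add] at this
    simpa using this.symm
  have hFa : F a = 0 := by linarith [hF a ha.1, hF c hc.1]
  have hFc : F c = 0 := by linarith [hF a ha.1, hF c hc.1]
  refine ⟨F, hFa, hFc, fun q hq hqa hqc => (hF q hq).lt_of_ne' fun hFq => ?_⟩
  have hF0 : F = AffineMap.const ℝ Pt 0 :=
    AffineMap.ext_on (affineSpan_eq_top_of_not_collinear
      (hgp a c q ha.1 hc.1 hq hne (Ne.symm hqc) (Ne.symm hqa))) <| by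
        rintro x (rfl | rfl | rfl) <;> assumption
  obtain ⟨w, hw⟩ := hint
  have := hfw w hw
  rw [← sub_pos, ← hFapply, hF0] at this
  exact this.ne' rfl

theorem mem_interior_convexHull_of_adjacentVertices {S : Set Pt} {t u w p : Pt} (hgp : GenPos S)
    (hTU : AdjacentVertices S t u) (hUW : AdjacentVertices S u w) (htw : t ≠ w) (hpS : p ∈ S)
    (hp : ¬ IsHullVertex S p) (hpC : p ∉ convexHull ℝ (S \ {u, p})) :
    p ∈ interior (convexHull ℝ {t, u, w}) := by
  have ⟨htu, ht, hu, _⟩ := hTU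
  have ⟨huw, _, hw, _⟩ := hUW
  have hpt : p ≠ t := fun h => hp (h ▸ ht)
  have hpu : p ≠ u := fun h => hp (h ▸ hu)
  have hpw : p ≠ w := fun h => hp (h ▸ hw)
  have hncol := hgp t u w ht.1 hu.1 hw.1 htu huw htw
  set b := triangleBasis hncol
  have hS : affineSpan ℝ S = ⊤ := top_unique <| affineSpan_eq_top_of_not_collinear hncol ▸
    affineSpan_mono ℝ (by rintro x (rfl | rfl | rfl); exacts [ht.1, hu.1, hw.1])
  obtain ⟨F, hFu, hFw, hF⟩ := hUW.exists_supporting_affineMap hgp hS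
  have h0 : 0 < b.coord 0 p := b.coord_pos_of_apply_pos F
    (fun j hj => by fin_cases j; exacts [absurd rfl hj, hFu, hFw])
    (hF t ht.1 htu htw) (hF p hpS hpu hpw)
  obtain ⟨G, hGt, hGu, hG⟩ := hTU.exists_supporting_affineMap hgp hS
  have h2 : 0 < b.coord 2 p := b.coord_pos_of_apply_pos G
    (fun j hj => by fin_cases j; exacts [hGt, hGu, absurd rfl hj])
    (hG w hw.1 htw.symm huw.symm) (hG p hpS hpt hpu)
  have hpHull : p ∈ convexHull ℝ (insert u (S \ {u, p})) := by
    have : insert u (S \ {u, p}) = S \ {p} := by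
      ext x; by_cases hx : x = u <;> simp [hx, hu.1, hpu.symm]
    exact this ▸ not_not.1 fun h => hp ⟨hpS, h⟩
  have h1 : 0 < b.coord 1 p := b.coord_one_pos_of_notMem_convexHull (C := S \ {u, p})
    (show t ∈ S \ {u, p} by simp [ht.1, htu, hpt.symm])
    (show w ∈ S \ {u, p} by simp [hw.1, huw.symm, hpw.symm]) hpC hpHull h0 h2
  rw [← range_triangleBasis hncol, b.interior_convexHull]
  intro i
  fin_cases i <;> assumption

theorem still_in_triangle (P : Finset Pt)
    (hgp : GenPos (↑P : Set Pt)) (t u v v' p : Pt)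
    (hc : ConsecutiveCW (↑P : Set Pt) t u v)
    (hpu : ActiveFor (↑P : Set Pt) u p)
    (hpv : ¬ ActiveFor (↑P : Set Pt) v p)
    (hc' : ConsecutiveCW ((↑P : Set Pt) \ {v}) t u v') :
    p ∈ interior (convexHull ℝ ({t, u, v'} : Set Pt)) := by
  obtain ⟨⟨⟨hpP, -⟩, hpExtreme⟩, hpNotVertex⟩ := hpu
  have hpv' : p ≠ v := fun h => hpNotVertex (h ▸ hc.2.1.2.2.1)
  have hsub : ((↑P : Set Pt) \ {v}) \ {u, p} ⊆ ((↑P : Set Pt) \ {u}) \ {p} := by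
    rintro x ⟨⟨hx, -⟩, hxup⟩
    exact ⟨⟨hx, (hxup <| .inl ·)⟩, (hxup <| .inr ·)⟩
  exact mem_interior_convexHull_of_adjacentVertices (hgp.mono sdiff_subset) hc'.1 hc'.2.1
    hc'.2.2.1 ⟨hpP, hpv'⟩ (fun h => hpv ⟨h, hpNotVertex⟩)
    fun h => hpExtreme (convexHull_mono hsub h)
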